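/- arXiv:2402.03066 — 2 statements merged into one kernel-verified Lean document; each statement's English description precedes it below -/
import Mathlib

section
/- Let a_1, ..., a_m and b_1, ..., b_p be nonnegative integers with a_1 + ... + a_m = b_1 + ... + b_p = n. Then the q-multinomial coefficient [n choose b_1,...,b_p]_q equals the sum over all p×m matrices (j_{α,β}) of nonnegative integers with row sums j_{w,1}+...+j_{w,m} = b_w for each w = 1,...,p and column sums j_{1,v}+...+j_{p,v} = a_v for each v = 1,...,m, of q^{X(j)} · Π_{β=1}^{m} [a_β choose j_{1,β},...,j_{p,β}]_q, where X(j) = Σ_{1≤l_1<l_2≤p} Σ_{1≤u_1<u_2≤m} j_{l_1,u_1} j_{l_2,u_2}. -/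
open Finset

/-- q-Pochhammer symbol `(x;q)_n = ∏_{j=0}^{n-1} (1 - x q^j)`. -/
noncomputable def qPoch {K : Type*} [Field K] (q x : K) (n : ℕ) : K :=
  ∏ j ∈ Finset.range n, (1 - x * q ^ j)


section rec
variable {K : Type*} [Field K] (q : K) (hq : ∀ n : ℕ, 1 ≤ n → q ^ n ≠ 1)

lemma qPoch_succ (n : ℕ) : qPoch q q (n + 1) = qPoch q q n * (1 - q ^ (n + 1)) := by
  rw [qPoch, Finset.prod_range_succ, ← pow_succ']; rfl

include hq in
lemma qPoch_ne_zero (n : ℕ) : qPoch q q n ≠ 0 := by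
  rw [qPoch]
  refine Finset.prod_ne_zero_iff.2 fun j _ => ?_
  rw [← pow_succ']
  intro h
  exact hq (j + 1) (Nat.le_add_left 1 j) (by rw [← sub_eq_zero]; rw [sub_eq_zero] at h ⊢; exact h.symm)

include hq in
lemma one_sub_qpow_ne_zero {k : ℕ} (hk : 1 ≤ k) : (1 : K) - q ^ k ≠ 0 :=
  fun h => hq k hk (sub_eq_zero.1 h).symm

noncomputable def qmul {p : ℕ} (b : Fin p → ℕ) : K :=
  qPoch q q (∑ i, b i) / ∏ i, qPoch q q (b i)

include hq in
lemma qmul_update {p : ℕ} (b : Fin p → ℕ) (w : Fin p) (hw : 0 < b w) :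
    qmul q (Function.update b w (b w - 1)) = qmul q b * (1 - q ^ b w) / (1 - q ^ (∑ i, b i)) := by
  have hmem : w ∈ (Finset.univ : Finset (Fin p)) := Finset.mem_univ w
  have hsum : ∑ i, Function.update b w (b w - 1) i = (b w - 1) + ∑ i ∈ Finset.univ.erase w, b i := by
    rw [Finset.sum_update_of_mem hmem, Finset.sdiff_singleton_eq_erase]
  have hsumb : ∑ i, b i = b w + ∑ i ∈ Finset.univ.erase w, b i := (Finset.add_sum_erase _ b hmem).symm
  have hposn : 1 ≤ ∑ i, b i := by omega
  have hsum' : (∑ i, Function.update b w (b w - 1) i) + 1 = ∑ i, b i := by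
    rw [hsum, hsumb]; omega
  have hprod : ∏ i, qPoch q q (b i)
      = qPoch q q (b w - 1) * (1 - q ^ b w) * ∏ i ∈ Finset.univ.erase w, qPoch q q (b i) := by
    rw [← Finset.mul_prod_erase _ _ hmem]
    congr 1
    have : b w = (b w - 1) + 1 := by omega
    rw [this, qPoch_succ]
    rw [← this]
  have hprodu : ∏ i, qPoch q q (Function.update b w (b w - 1) i)
      = qPoch q q (b w - 1) * ∏ i ∈ Finset.univ.erase w, qPoch q q (b i) := by
    rw [← Finset.mul_prod_erase _ _ hmem, Function.update_self]
    congr 1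
    exact Finset.prod_congr rfl fun i hi => by
      rw [Function.update_of_ne (Finset.ne_of_mem_erase hi)]
  have hq1 : qPoch q q (∑ i, b i) = qPoch q q (∑ i, Function.update b w (b w - 1) i) * (1 - q ^ (∑ i, b i)) := by
    conv_lhs => rw [← hsum']
    rw [qPoch_succ, hsum']
  rw [qmul, qmul, hq1, hprod, hprodu]
  have h1 : (1:K) - q ^ (∑ i, b i) ≠ 0 := one_sub_qpow_ne_zero q hq hposn
  have h2 : (1:K) - q ^ b w ≠ 0 := one_sub_qpow_ne_zero q hq hw
  have h3 : qPoch q q (b w - 1) ≠ 0 := qPoch_ne_zero q hq _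
  have h4 : ∏ i ∈ Finset.univ.erase w, qPoch q q (b i) ≠ 0 :=
    Finset.prod_ne_zero_iff.2 fun i _ => qPoch_ne_zero q hq _
  field_simp

lemma telescope (p : ℕ) (b : Fin p → ℕ) :
    ∑ w, q ^ (∑ i, if i < w then b i else 0) * (1 - q ^ b w) = 1 - q ^ (∑ i, b i) := by
  induction p with
  | zero => simp
  | succ p ih =>
    rw [Fin.sum_univ_succ]
    have h0 : ∀ i : Fin (p+1), ¬ (i < 0) := fun i => Fin.not_lt_zero i
    simp only [h0, if_false, Finset.sum_const_zero, pow_zero, one_mul]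
    have hstep : ∀ w : Fin p,
        (∑ i : Fin (p+1), if i < w.succ then b i else 0)
          = b 0 + ∑ i : Fin p, if i < w then b (i.succ) else 0 := by
      intro w
      rw [Fin.sum_univ_succ]
      simp [Fin.succ_pos, Fin.succ_lt_succ_iff]
    have := ih (fun i => b i.succ)
    calc (1 - q ^ b 0) + ∑ w : Fin p, q ^ (∑ i : Fin (p+1), if i < w.succ then b i else 0) * (1 - q ^ b w.succ)
        = (1 - q ^ b 0) + q ^ b 0 * ∑ w : Fin p, q ^ (∑ i : Fin p, if i < w then b i.succ else 0) * (1 - q ^ b w.succ) := by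
          rw [Finset.mul_sum]
          congr 1
          refine Finset.sum_congr rfl fun w _ => ?_
          rw [hstep w, pow_add]; ring
      _ = (1 - q ^ b 0) + q ^ b 0 * (1 - q ^ (∑ i : Fin p, b i.succ)) := by rw [this]
      _ = 1 - q ^ (∑ i : Fin (p+1), b i) := by
          rw [Fin.sum_univ_succ, pow_add]; ring

include hq in
lemma qmul_rec {p : ℕ} (b : Fin p → ℕ) (hb : 0 < ∑ i, b i) :
    qmul q b = ∑ w, if 0 < b w then
      q ^ (∑ i, if i < w then b i else 0) * qmul q (Function.update b w (b w - 1)) else 0 := by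
  have h1 : (1:K) - q ^ (∑ i, b i) ≠ 0 := one_sub_qpow_ne_zero q hq hb
  have key : ∀ w, (if 0 < b w then q ^ (∑ i, if i < w then b i else 0) * qmul q (Function.update b w (b w - 1)) else 0)
      = qmul q b / (1 - q ^ (∑ i, b i)) * (q ^ (∑ i, if i < w then b i else 0) * (1 - q ^ b w)) := by
    intro w
    by_cases hw : 0 < b w
    · rw [if_pos hw, qmul_update q hq b w hw]; field_simp
    · rw [if_neg hw]
      have hbw : b w = 0 := by omega
      rw [hbw]; simp
  rw [Finset.sum_congr rfl (fun w _ => key w), ← Finset.mul_sum, telescope q p b]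
  field_simp


/-- cross statistic -/
def cinv {p : ℕ} (x y : Fin p → ℕ) : ℕ := ∑ i, ∑ i', if i < i' then x i * y i' else 0

lemma cinv_add_right {p : ℕ} (x y z : Fin p → ℕ) :
    cinv x (fun i => y i + z i) = cinv x y + cinv x z := by
  unfold cinv
  rw [← Finset.sum_add_distrib]
  refine Finset.sum_congr rfl fun i _ => ?_
  rw [← Finset.sum_add_distrib]
  refine Finset.sum_congr rfl fun i' _ => ?_
  split_ifs <;> ring

lemma cinv_single {p : ℕ} (x : Fin p → ℕ) (w : Fin p) :
    cinv x (fun i => if i = w then 1 else 0) = ∑ i, if i < w then x i else 0 := by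
  unfold cinv
  refine Finset.sum_congr rfl fun i _ => ?_
  have : ∀ i' : Fin p, (if i < i' then x i * (if i' = w then 1 else 0) else 0)
      = if i' = w then (if i < w then x i else 0) else 0 := by
    intro i'
    split_ifs with h1 h2 h3 h4 <;> simp_all
  rw [Finset.sum_congr rfl fun i' _ => this i', Finset.sum_ite_eq' Finset.univ w]
  simp

lemma sum_update_pred {p : ℕ} (b : Fin p → ℕ) (w : Fin p) (hw : 0 < b w) :
    ∑ i, Function.update b w (b w - 1) i + 1 = ∑ i, b i := by
  rw [Finset.sum_update_of_mem (Finset.mem_univ w), Finset.sdiff_singleton_eq_erase]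
  have h := (Finset.add_sum_erase _ b (Finset.mem_univ w)).symm
  omega

lemma le_sum_eq {p : ℕ} (b j : Fin p → ℕ) (hle : ∀ i, j i ≤ b i)
    (hsum : ∑ i, j i = ∑ i, b i) : j = b := by
  funext i
  by_contra hne
  have hlt : j i < b i := lt_of_le_of_ne (hle i) hne
  have := Finset.sum_lt_sum (fun k _ => hle k) ⟨i, Finset.mem_univ i, hlt⟩
  omega

include hq in
lemma two_block (N : ℕ) (n : ℕ) : ∀ {p : ℕ} (b : Fin p → ℕ) (a₁ : ℕ),
    ∑ i, b i = n → a₁ ≤ n → n < N →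
    qmul q b = ∑ j ∈ Fintype.piFinset (fun _ : Fin p => Finset.range N),
      if (∀ i, j i ≤ b i) ∧ (∑ i, j i = a₁) then
        q ^ cinv j (fun i => b i - j i) * (qmul q j * qmul q (fun i => b i - j i)) else 0 := by
  induction n with
  | zero =>
    intro p b a₁ hn ha hN
    have hb0 : ∀ i, b i = 0 := by
      intro i
      have := Finset.single_le_sum (f := b) (fun k _ => Nat.zero_le _) (Finset.mem_univ i)
      omega
    have ha0 : a₁ = 0 := by omega
    rw [Finset.sum_eq_single (fun _ : Fin p => 0)]
    · have hb : b = fun _ => 0 := funext hb0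
      subst hb ha0
      simp [qmul, qPoch, cinv]
    · intro j hj hne
      rw [if_neg]
      rintro ⟨hle, hsum⟩
      exact hne (funext fun i => by have := hle i; have := hb0 i; omega)
    · intro habs
      exact absurd (Fintype.mem_piFinset.2 fun i => Finset.mem_range.2 (by omega)) habs
  | succ n IH =>
    intro p b a₁ hn ha hN
    by_cases hcase : a₁ = n + 1
    · rw [Finset.sum_eq_single b]
      · have hz : (fun i => b i - b i) = (fun _ : Fin p => 0) := funext fun i => Nat.sub_self _
        rw [if_pos ⟨fun i => le_refl _, by omega⟩, hz]
        have hq0 : qmul q (fun _ : Fin p => 0) = 1 := by simp [qmul, qPoch]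
        have hc0 : cinv b (fun _ : Fin p => 0) = 0 := by simp [cinv]
        rw [hq0, hc0, pow_zero, one_mul, mul_one]
      · intro j hj hne
        rw [if_neg]
        rintro ⟨hle, hsum⟩
        exact hne (le_sum_eq b j hle (by omega))
      · intro habs
        refine absurd (Fintype.mem_piFinset.2 fun i => Finset.mem_range.2 ?_) habs
        have := Finset.single_le_sum (f := b) (fun k _ => Nat.zero_le _) (Finset.mem_univ i)
        omega
    · have ha' : a₁ ≤ n := by omega
      have hpos : 0 < ∑ i, b i := by omega
      rw [qmul_rec q hq b hpos]
      have hL : ∀ w : Fin p, (if 0 < b w then q ^ (∑ i, if i < w then b i else 0) * qmul q (Function.update b w (b w - 1)) else 0)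
          = ∑ j ∈ Fintype.piFinset (fun _ : Fin p => Finset.range N),
              (if 0 < b w then q ^ (∑ i, if i < w then b i else 0) *
                (if (∀ i, j i ≤ Function.update b w (b w - 1) i) ∧ (∑ i, j i = a₁) then
                  q ^ cinv j (fun i => Function.update b w (b w - 1) i - j i) *
                    (qmul q j * qmul q (fun i => Function.update b w (b w - 1) i - j i)) else 0) else 0) := by
        intro w
        by_cases hw : 0 < b w
        · simp only [if_pos hw]
          have hupd := sum_update_pred b w hw
          rw [IH (Function.update b w (b w - 1)) a₁ (by omega) ha' (by omega), Finset.mul_sum]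
        · simp only [if_neg hw, Finset.sum_const_zero]
      rw [Finset.sum_congr rfl fun w _ => hL w, Finset.sum_comm]
      refine Finset.sum_congr rfl fun j hj => ?_
      by_cases hg : (∀ i, j i ≤ b i) ∧ (∑ i, j i = a₁)
      · rw [if_pos hg]
        obtain ⟨hle, hsj⟩ := hg
        have hsub : ∑ i, (b i - j i) = (∑ i, b i) - ∑ i, j i :=
          Finset.sum_tsub_distrib Finset.univ fun i _ => hle i
        have hposd : 0 < ∑ i, (b i - j i) := by omega
        rw [qmul_rec q hq (fun i => b i - j i) hposd, Finset.mul_sum, Finset.mul_sum]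
        refine Finset.sum_congr rfl fun w _ => ?_
        beta_reduce
        by_cases hjw : j w < b w
        · have hbw : 0 < b w := by omega
          have hG2 : (∀ i, j i ≤ Function.update b w (b w - 1) i) ∧ (∑ i, j i = a₁) := by
            refine ⟨fun i => ?_, hsj⟩
            rcases eq_or_ne i w with rfl | hne
            · rw [Function.update_self]; omega
            · rw [Function.update_of_ne hne]; exact hle i
          have hD : (fun i => Function.update b w (b w - 1) i - j i)
              = Function.update (fun i => b i - j i) w ((fun i => b i - j i) w - 1) := by
            funext i
            rcases eq_or_ne i w with rfl | hne
            · simp only [Function.update_self]; omega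
            · rw [Function.update_of_ne hne, Function.update_of_ne hne]
          have hsplit : (fun i => b i - j i)
              = (fun i => (Function.update b w (b w - 1) i - j i) + (if i = w then 1 else 0)) := by
            funext i
            rcases eq_or_ne i w with rfl | hne
            · rw [Function.update_self, if_pos rfl]; omega
            · rw [Function.update_of_ne hne, if_neg hne]; omega
          have hcinv : cinv j (fun i => b i - j i)
              = cinv j (fun i => Function.update b w (b w - 1) i - j i) + ∑ i, (if i < w then j i else 0) := by
            rw [hsplit, cinv_add_right, cinv_single]
          have hexp : (∑ i, if i < w then b i else 0)
              = (∑ i, if i < w then b i - j i else 0) + ∑ i, (if i < w then j i else 0) := by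
            rw [← Finset.sum_add_distrib]
            refine Finset.sum_congr rfl fun i _ => ?_
            have := hle i
            split_ifs <;> omega
          rw [if_pos hbw, if_pos hG2, if_pos (show 0 < b w - j w by omega), hcinv, hexp, hD,
            pow_add, pow_add]
          ring
        · have hjw' : j w = b w := le_antisymm (hle w) (by omega)
          have hno : ¬ (0 < b w - j w) := by omega
          rw [if_neg hno, mul_zero, mul_zero]
          by_cases hbw : 0 < b w
          · rw [if_pos hbw, if_neg, mul_zero]
            rintro ⟨hle', -⟩
            have := hle' w
            rw [Function.update_self] at this
            omega
          · rw [if_neg hbw]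
      · rw [if_neg hg]
        refine Finset.sum_eq_zero fun w _ => ?_
        by_cases hw : 0 < b w
        · rw [if_pos hw, if_neg, mul_zero]
          rintro ⟨hle', hsj⟩
          refine hg ⟨fun i => ?_, hsj⟩
          rcases eq_or_ne i w with rfl | hne
          · have := hle' i; rw [Function.update_self] at this; omega
          · have := hle' i; rwa [Function.update_of_ne hne] at this
        · rw [if_neg hw]


lemma sum_piFinset_cons {M : Type*} [AddCommMonoid M] {m : ℕ} {α : Type*} [DecidableEq α]
    (s : Finset α) (f : (Fin (m + 1) → α) → M) :
    ∑ J ∈ Fintype.piFinset (fun _ : Fin (m + 1) => s), f J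
      = ∑ x ∈ s, ∑ J' ∈ Fintype.piFinset (fun _ : Fin m => s), f (Fin.cons x J') := by
  rw [← Finset.sum_product']
  refine (Finset.sum_nbij' (fun J => (J 0, Fin.tail J)) (fun y => Fin.cons y.1 y.2)
    ?_ ?_ ?_ ?_ ?_)
  · intro J hJ
    have := Fintype.mem_piFinset.1 hJ
    exact Finset.mem_product.2 ⟨this 0, Fintype.mem_piFinset.2 fun i => this i.succ⟩
  · intro y hy
    have := Finset.mem_product.1 hy
    refine Fintype.mem_piFinset.2 fun i => ?_
    refine Fin.cases ?_ (fun i' => ?_) i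
    · simpa using this.1
    · simpa using Fintype.mem_piFinset.1 this.2 i'
  · intro J hJ
    exact Fin.cons_self_tail J
  · intro y hy
    simp [Fin.tail_cons]
  · intro J hJ
    rw [Fin.cons_self_tail]


lemma cinv_sum_right {p : ℕ} {ι : Type*} (s : Finset ι) (x : Fin p → ℕ) (y : ι → Fin p → ℕ) :
    cinv x (fun i => ∑ β ∈ s, y β i) = ∑ β ∈ s, cinv x (y β) := by
  unfold cinv
  have h : ∀ i i' : Fin p, (if i < i' then x i * ∑ β ∈ s, y β i' else 0)
      = ∑ β ∈ s, (if i < i' then x i * y β i' else 0) := by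
    intro i i'
    split_ifs
    · rw [Finset.mul_sum]
    · rw [Finset.sum_const_zero]
  simp only [h]
  rw [show (∑ i : Fin p, ∑ i' : Fin p, ∑ β ∈ s, if i < i' then x i * y β i' else 0)
      = ∑ i : Fin p, ∑ β ∈ s, ∑ i' : Fin p, (if i < i' then x i * y β i' else 0) from
    Finset.sum_congr rfl fun i _ => Finset.sum_comm, Finset.sum_comm]

lemma X_cons {m p : ℕ} (j₀ : Fin p → ℕ) (J' : Fin m → Fin p → ℕ) :
    (∑ β₁ : Fin (m + 1), ∑ β₂, if β₁ < β₂ then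
        cinv ((Fin.cons j₀ J' : Fin (m+1) → Fin p → ℕ) β₁) ((Fin.cons j₀ J' : Fin (m+1) → Fin p → ℕ) β₂) else 0)
      = (∑ β', cinv j₀ (J' β'))
        + ∑ β₁ : Fin m, ∑ β₂, if β₁ < β₂ then cinv (J' β₁) (J' β₂) else 0 := by
  rw [Fin.sum_univ_succ]
  congr 1
  · rw [Fin.sum_univ_succ]
    simp [Fin.succ_pos]
  · refine Finset.sum_congr rfl fun β₁ _ => ?_
    rw [Fin.sum_univ_succ]
    simp [Fin.succ_lt_succ_iff]


include hq in
lemma multi_block (N : ℕ) : ∀ (m : ℕ) (a : Fin m → ℕ) {p : ℕ} (b : Fin p → ℕ),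
    ∑ i, b i = ∑ β, a β → (∑ i, b i) < N →
    qmul q b = ∑ J ∈ Fintype.piFinset (fun _ : Fin m => Fintype.piFinset (fun _ : Fin p => Finset.range N)),
      if (∀ i, ∑ β, J β i = b i) ∧ (∀ β, ∑ i, J β i = a β) then
        q ^ (∑ β₁, ∑ β₂, if β₁ < β₂ then cinv (J β₁) (J β₂) else 0) * ∏ β, qmul q (J β) else 0 := by
  intro m
  induction m with
  | zero =>
    intro a p b hs hN
    have hb0 : ∀ i, b i = 0 := by
      intro i
      have h1 : ∑ β : Fin 0, a β = 0 := rfl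
      have := Finset.single_le_sum (f := b) (fun k _ => Nat.zero_le _) (Finset.mem_univ i)
      omega
    have hmem : (fun (_ : Fin 0) (_ : Fin p) => 0) ∈
        Fintype.piFinset (fun _ : Fin 0 => Fintype.piFinset (fun _ : Fin p => Finset.range N)) :=
      Fintype.mem_piFinset.2 fun β => β.elim0
    rw [Finset.sum_eq_single (fun (_ : Fin 0) (_ : Fin p) => 0)]
    · rw [if_pos ⟨fun i => by simpa using (hb0 i).symm, fun β => β.elim0⟩]
      have hb : b = fun _ => 0 := funext hb0
      rw [hb]
      simp [qmul, qPoch]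
    · intro J hJ hne
      exact absurd (funext fun β => β.elim0) hne
    · intro h
      exact absurd hmem h
  | succ m IH =>
    intro a p b hs hN
    have hsa : ∑ β, a β = a 0 + ∑ β : Fin m, a β.succ := Fin.sum_univ_succ a
    have ha0 : a 0 ≤ ∑ i, b i := by omega
    have h2b := two_block q hq N (∑ i, b i) b (a 0) rfl ha0 hN
    rw [h2b, sum_piFinset_cons]
    refine Finset.sum_congr rfl fun j₀ hj₀ => ?_
    by_cases hG0 : (∀ i, j₀ i ≤ b i) ∧ (∑ i, j₀ i = a 0)
    · rw [if_pos hG0]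
      obtain ⟨hle, hsj⟩ := hG0
      have hsub : ∑ i, (b i - j₀ i) = ∑ i, b i - ∑ i, j₀ i :=
        Finset.sum_tsub_distrib Finset.univ fun i _ => hle i
      have hIH := IH (fun β => a β.succ) (fun i => b i - j₀ i)
        (by simpa using (by omega : ∑ i, (b i - j₀ i) = ∑ β : Fin m, a β.succ))
        (by simpa using (by omega : ∑ i, (b i - j₀ i) < N))
      rw [hIH, Finset.mul_sum, Finset.mul_sum]
      refine Finset.sum_congr rfl fun J' hJ' => ?_
      by_cases hG' : (∀ i, ∑ β : Fin m, J' β i = b i - j₀ i) ∧ (∀ β : Fin m, ∑ i, J' β i = a β.succ)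
      · have hfull : (∀ i, ∑ β : Fin (m+1), (Fin.cons j₀ J' : Fin (m+1) → Fin p → ℕ) β i = b i)
            ∧ (∀ β : Fin (m+1), ∑ i, (Fin.cons j₀ J' : Fin (m+1) → Fin p → ℕ) β i = a β) := by
          constructor
          · intro i
            rw [Fin.sum_univ_succ]
            simp only [Fin.cons_zero, Fin.cons_succ]
            have := hG'.1 i
            have := hle i
            omega
          · intro β
            refine Fin.cases ?_ (fun β' => ?_) β
            · simpa using hsj
            · simpa using hG'.2 β'
        rw [if_pos hG', if_pos hfull, X_cons, Fin.prod_univ_succ]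
        simp only [Fin.cons_zero, Fin.cons_succ]
        have hc : cinv j₀ (fun i => b i - j₀ i) = ∑ β', cinv j₀ (J' β') := by
          rw [show (fun i => b i - j₀ i) = (fun i => ∑ β' : Fin m, J' β' i) from
            funext fun i => (hG'.1 i).symm, cinv_sum_right]
        rw [hc, pow_add]
        ring
      · have hnfull : ¬ ((∀ i, ∑ β : Fin (m+1), (Fin.cons j₀ J' : Fin (m+1) → Fin p → ℕ) β i = b i)
            ∧ (∀ β : Fin (m+1), ∑ i, (Fin.cons j₀ J' : Fin (m+1) → Fin p → ℕ) β i = a β)) := by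
          rintro ⟨h1, h2⟩
          refine hG' ⟨fun i => ?_, fun β => ?_⟩
          · have := h1 i
            rw [Fin.sum_univ_succ] at this
            simp only [Fin.cons_zero, Fin.cons_succ] at this
            have := hle i
            omega
          · have := h2 β.succ
            simpa using this
        rw [if_neg hG', if_neg hnfull, mul_zero, mul_zero]
    · rw [if_neg hG0]
      refine (Finset.sum_eq_zero fun J' _ => ?_).symm
      rw [if_neg]
      rintro ⟨h1, h2⟩
      refine hG0 ⟨fun i => ?_, ?_⟩
      · have := h1 i
        rw [Fin.sum_univ_succ] at this
        simp only [Fin.cons_zero, Fin.cons_succ] at this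
        omega
      · have := h2 0
        simpa using this

lemma exp_eq {p m : ℕ} (j : Fin p → Fin m → ℕ) :
    (∑ l₁, ∑ l₂, ∑ u₁, ∑ u₂, if l₁ < l₂ ∧ u₁ < u₂ then j l₁ u₁ * j l₂ u₂ else 0)
      = ∑ β₁ : Fin m, ∑ β₂, if β₁ < β₂ then cinv (fun i => j i β₁) (fun i => j i β₂) else 0 := by
  have key : ∀ (f : Fin p → Fin p → Fin m → Fin m → ℕ),
      (∑ l₁, ∑ l₂, ∑ u₁, ∑ u₂, f l₁ l₂ u₁ u₂) = ∑ u₁, ∑ u₂, ∑ l₁, ∑ l₂, f l₁ l₂ u₁ u₂ := by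
    intro f
    calc (∑ l₁, ∑ l₂, ∑ u₁, ∑ u₂, f l₁ l₂ u₁ u₂)
        = ∑ l₁, ∑ u₁, ∑ l₂, ∑ u₂, f l₁ l₂ u₁ u₂ :=
          Finset.sum_congr rfl fun l₁ _ => Finset.sum_comm
      _ = ∑ u₁, ∑ l₁, ∑ l₂, ∑ u₂, f l₁ l₂ u₁ u₂ := Finset.sum_comm
      _ = ∑ u₁, ∑ l₁, ∑ u₂, ∑ l₂, f l₁ l₂ u₁ u₂ :=
          Finset.sum_congr rfl fun _ _ => Finset.sum_congr rfl fun _ _ => Finset.sum_comm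
      _ = ∑ u₁, ∑ u₂, ∑ l₁, ∑ l₂, f l₁ l₂ u₁ u₂ :=
          Finset.sum_congr rfl fun _ _ => Finset.sum_comm
  rw [key]
  refine Finset.sum_congr rfl fun β₁ _ => Finset.sum_congr rfl fun β₂ _ => ?_
  unfold cinv
  by_cases h : β₁ < β₂ <;> simp [h]

end rec

/-- Lemma 4.6 of [KRSSlong]: the q-multinomial coefficient
`[n choose b_1,…,b_p]_q` expands as a sum over `p × m` matrices of nonnegative integers
with row sums `b` and column sums `a`, of `q^{X(j)}` times products of q-multinomial
coefficients `[a_β choose j_{1,β},…,j_{p,β}]_q`. -/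
theorem qMultinomial_expansion {K : Type*} [Field K] (q : K)
    (hq : ∀ n : ℕ, 1 ≤ n → q ^ n ≠ 1)
    (m p n : ℕ) (a : Fin m → ℕ) (b : Fin p → ℕ)
    (ha : ∑ v, a v = n) (hb : ∑ w, b w = n) :
    qPoch q q n / ∏ w, qPoch q q (b w) =
      ∑ j ∈ (Fintype.piFinset fun _ : Fin p =>
              Fintype.piFinset fun _ : Fin m => Finset.range (n + 1)) |>.filter
            (fun j => (∀ w, ∑ v, j w v = b w) ∧ (∀ v, ∑ w, j w v = a v)),
        q ^ (∑ l₁, ∑ l₂, ∑ u₁, ∑ u₂,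
              if l₁ < l₂ ∧ u₁ < u₂ then j l₁ u₁ * j l₂ u₂ else 0) *
          ∏ β, (qPoch q q (a β) / ∏ α, qPoch q q (j α β)) := by
  have hab : ∑ i, b i = ∑ β, a β := by rw [hb, ha]
  have hlt : ∑ i, b i < n + 1 := by omega
  have hmb := multi_block q hq (n + 1) m a b hab hlt
  have hL : qPoch q q n / ∏ w, qPoch q q (b w) = qmul q b := by rw [qmul, hb]
  rw [hL, hmb, Finset.sum_filter]
  refine Finset.sum_nbij' (fun J => fun i β => J β i) (fun j => fun β i => j i β)
    ?_ ?_ ?_ ?_ ?_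
  · intro J hJ
    have := Fintype.mem_piFinset.1 hJ
    exact Fintype.mem_piFinset.2 fun i => Fintype.mem_piFinset.2 fun β =>
      Fintype.mem_piFinset.1 (this β) i
  · intro j hj
    have := Fintype.mem_piFinset.1 hj
    exact Fintype.mem_piFinset.2 fun β => Fintype.mem_piFinset.2 fun i =>
      Fintype.mem_piFinset.1 (this i) β
  · intro J _; rfl
  · intro j _; rfl
  · intro J hJ
    by_cases hg : (∀ i, ∑ β, J β i = b i) ∧ (∀ β, ∑ i, J β i = a β)
    · rw [if_pos hg, if_pos ⟨hg.1, hg.2⟩, exp_eq]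
      congr 1
      refine Finset.prod_congr rfl fun β _ => ?_
      rw [qmul, hg.2 β]
    · rw [if_neg hg, if_neg (fun hc => hg ⟨hc.1, hc.2⟩)]
end

section
/- Define HP(q;o)_m = Σ_{i=0}^{m} a^i q^{-i} Q^{-i} [m choose i]_{qt²} (qt²)^{(m+o)i} (-qt;qt²)_{m-i} (-t;qt²)_i and D_i = 1 + a q^{-i} t^{3-2i} Q^{-1}. Then HP(q;o)_m ≡ Π_{ℓ=1}^{m} D_{2-ℓ-m-o} modulo D_{2-m-o}, i.e., the difference HP(q;o)_m − Π_{ℓ=1}^{m} D_{2-ℓ-m-o} is divisible by D_{2-m-o} with quotient having nonnegative integer coefficients. -/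
open Finset

/-- The Laurent polynomial ring `ℤ[a^{±1}, q^{±1}, t^{±1}, Q^{±1}]`, realized as the
group algebra of `ℤ⁴` over `ℤ`; variable `0` is `a`, `1` is `q`, `2` is `t`, `3` is `Q`. -/
abbrev LaurentRing := AddMonoidAlgebra ℤ (Fin 4 →₀ ℤ)

/-- The monomial `a^w q^x t^y Q^z`. -/
noncomputable def mon (w x y z : ℤ) : LaurentRing :=
  AddMonoidAlgebra.single
    (Finsupp.single 0 w + Finsupp.single 1 x + Finsupp.single 2 y + Finsupp.single 3 z) 1

/-- The Gaussian binomial coefficient `[m choose i]_s` as a polynomial expression in `s`,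
defined via the q-Pascal recursion. -/
def qbinom {R : Type*} [CommRing R] (s : R) : ℕ → ℕ → R
  | _, 0 => 1
  | 0, _ + 1 => 0
  | m + 1, i + 1 => qbinom s m i + s ^ (i + 1) * qbinom s m (i + 1)

/-- `HP(q;o)_m = Σ_{i=0}^m a^i q^{-i} Q^{-i} [m choose i]_{qt²} (qt²)^{(m+o)i}
  (-qt;qt²)_{m-i} (-t;qt²)_i` as an element of the Laurent polynomial ring. -/
noncomputable def HPL (o : ℤ) (m : ℕ) : LaurentRing :=
  ∑ i ∈ Finset.range (m + 1),
    mon i (-(i : ℤ) + ((m : ℤ) + o) * i) (2 * (((m : ℤ) + o) * i)) (-(i : ℤ)) *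
      qbinom (mon 0 1 2 0) m i *
      (∏ j ∈ Finset.range (m - i), (1 + mon 0 ((j : ℤ) + 1) (2 * j + 1) 0)) *
      (∏ j ∈ Finset.range i, (1 + mon 0 (j : ℤ) (2 * j + 1) 0))

/-- `D_i = 1 + a q^{-i} t^{3-2i} Q^{-1}`. -/
noncomputable def DD (i : ℤ) : LaurentRing := 1 + mon 1 (-i) (3 - 2 * i) (-1)

/- ## mon lemmas -/

lemma mon_mul (w x y z w' x' y' z' : ℤ) :
    mon w x y z * mon w' x' y' z' = mon (w+w') (x+x') (y+y') (z+z') := by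
  unfold mon
  rw [AddMonoidAlgebra.single_mul_single]
  congr 1
  simp [Finsupp.single_add]; abel

lemma mon_congr {w x y z w' x' y' z' : ℤ} (h1 : w = w') (h2 : x = x') (h3 : y = y')
    (h4 : z = z') : mon w x y z = mon w' x' y' z' := by rw [h1, h2, h3, h4]

lemma mon_zero : mon 0 0 0 0 = 1 := by
  unfold mon
  simp [AddMonoidAlgebra.one_def]

lemma mon_pow (w x y z : ℤ) (n : ℕ) :
    (mon w x y z) ^ n = mon (n*w) (n*x) (n*y) (n*z) := by
  induction n with
  | zero => simpa using mon_zero.symm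
  | succ k ih =>
    rw [pow_succ, ih, mon_mul]
    exact mon_congr (by push_cast; ring) (by push_cast; ring) (by push_cast; ring)
      (by push_cast; ring)

lemma s_pow (n : ℕ) : (mon 0 1 2 0) ^ n = mon 0 (n : ℤ) (2*(n : ℤ)) 0 := by
  rw [mon_pow]
  exact mon_congr (by ring) (by ring) (by ring) (by ring)

/- ## Nonnegativity -/

def NN (p : LaurentRing) : Prop := ∀ v, 0 ≤ p.coeff v

lemma NN_zero : NN 0 := fun _ => le_refl _

lemma NN_add {p q : LaurentRing} (hp : NN p) (hq : NN q) : NN (p + q) := fun v => by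
  simpa using add_nonneg (hp v) (hq v)

lemma NN_mon (w x y z : ℤ) : NN (mon w x y z) := fun v => by
  unfold mon
  by_cases h : v = Finsupp.single 0 w + Finsupp.single 1 x + Finsupp.single 2 y + Finsupp.single 3 z
  · simp [AddMonoidAlgebra.coeff_single, h]
  · simp [AddMonoidAlgebra.coeff_single, Finsupp.single_apply, Ne.symm h]

lemma NN_one : NN 1 := by rw [← mon_zero]; exact NN_mon 0 0 0 0

lemma NN_mul {p q : LaurentRing} (hp : NN p) (hq : NN q) : NN (p * q) := fun v => by
  classical
  rw [AddMonoidAlgebra.mul_apply]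
  simp only [Finsupp.sum]
  refine Finset.sum_nonneg fun a₁ _ => Finset.sum_nonneg fun a₂ _ => ?_
  split
  · exact mul_nonneg (hp a₁) (hq a₂)
  · exact le_refl 0

lemma NN_sum {ι : Type*} {t : Finset ι} {f : ι → LaurentRing} (h : ∀ i ∈ t, NN (f i)) :
    NN (∑ i ∈ t, f i) := by
  classical
  induction t using Finset.induction with
  | empty => simpa using NN_zero
  | insert _ _ hne ih =>
    rw [Finset.sum_insert hne]
    exact NN_add (h _ (Finset.mem_insert_self _ _))
      (ih fun i hi => h i (Finset.mem_insert_of_mem hi))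

lemma NN_prod {ι : Type*} {t : Finset ι} {f : ι → LaurentRing} (h : ∀ i ∈ t, NN (f i)) :
    NN (∏ i ∈ t, f i) := by
  classical
  induction t using Finset.induction with
  | empty => simpa using NN_one
  | insert _ _ hne ih =>
    rw [Finset.prod_insert hne]
    exact NN_mul (h _ (Finset.mem_insert_self _ _))
      (ih fun i hi => h i (Finset.mem_insert_of_mem hi))

lemma NN_pow {p : LaurentRing} (hp : NN p) (n : ℕ) : NN (p ^ n) := by
  induction n with
  | zero => simpa using NN_one
  | succ k ih => rw [pow_succ]; exact NN_mul ih hp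

/- ## qbinom lemmas -/

section qbinomlemmas
variable {R : Type*} [CommRing R] (s : R)

lemma qbinom_zero_right (m : ℕ) : qbinom s m 0 = 1 := by cases m <;> rfl

lemma qbinom_succ_succ (m i : ℕ) :
    qbinom s (m+1) (i+1) = qbinom s m i + s ^ (i + 1) * qbinom s m (i + 1) := rfl

lemma qbinom_eq_zero : ∀ m i, m < i → qbinom s m i = 0 := by
  intro m
  induction m with
  | zero =>
    intro i hi
    match i, hi with
    | i + 1, _ => rfl
  | succ k ih =>
    intro i hi
    match i, hi with
    | j + 1, hi =>
      rw [qbinom_succ_succ, ih j (by omega), ih (j+1) (by omega)]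
      ring

lemma qbinom_one (m : ℕ) : qbinom s m 1 = ∑ k ∈ range m, s ^ k := by
  induction m with
  | zero => simp [qbinom]
  | succ k ih =>
    rw [qbinom_succ_succ, qbinom_zero_right, ih, geom_sum_succ]
    ring

lemma qbinom_pascal_symm : ∀ m i, i ≤ m →
    qbinom s (m+1) (i+1) = s ^ (m-i) * qbinom s m i + qbinom s m (i+1) := by
  intro m
  induction m with
  | zero =>
    intro i hi
    interval_cases i
    simp [qbinom]
  | succ k ih =>
    intro i hi
    cases i with
    | zero =>
      rw [qbinom_succ_succ, qbinom_zero_right, qbinom_one, Nat.sub_zero]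
      have h1 := geom_sum_succ' (x := s) (n := k+1)
      have h2 := geom_sum_succ (x := s) (n := k+1)
      linear_combination h1 - h2
    | succ j =>
      have hj : j ≤ k := by omega
      rcases Nat.lt_or_ge j k with h | h
      · obtain ⟨d, rfl⟩ : ∃ d, k = j + 1 + d := ⟨k - j - 1, by omega⟩
        have A1 := qbinom_succ_succ s (j+1+d+1) (j+1)
        have A2 := ih j hj
        have A3 := ih (j+1) (by omega)
        have A4 := qbinom_succ_succ s (j+1+d) j
        have A5 := qbinom_succ_succ s (j+1+d) (j+1)
        rw [show j + 1 + d - j = d + 1 by omega] at A2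
        rw [show j + 1 + d - (j+1) = d by omega] at A3
        rw [show j + 1 + d + 1 - (j + 1) = d + 1 by omega]
        linear_combination A1 + A2 - s^(d+1)*A4 + s^(j+2)*A3 - A5
      · have hjk : j = k := by omega
        subst hjk
        rw [qbinom_succ_succ s (j+1) (j+1), qbinom_eq_zero s (j+1) (j+2) (by omega),
          show j + 1 - (j+1) = 0 by omega]
        ring

end qbinomlemmas

lemma NN_qbinom {s : LaurentRing} (hs : NN s) : ∀ m i, NN (qbinom s m i) := by
  intro m
  induction m with
  | zero =>
    intro i
    cases i with
    | zero => exact NN_one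
    | succ j => exact NN_zero
  | succ k ih =>
    intro i
    cases i with
    | zero => rw [qbinom_zero_right]; exact NN_one
    | succ j =>
      rw [qbinom_succ_succ]
      exact NN_add (ih j) (NN_mul (NN_pow hs (j+1)) (ih (j+1)))

lemma NN_HPL (o : ℤ) (m : ℕ) : NN (HPL o m) := by
  rw [HPL]
  refine NN_sum fun i _ => ?_
  refine NN_mul (NN_mul (NN_mul (NN_mon _ _ _ _) (NN_qbinom (NN_mon _ _ _ _) m i)) ?_) ?_
  · exact NN_prod fun j _ => NN_add NN_one (NN_mon _ _ _ _)
  · exact NN_prod fun j _ => NN_add NN_one (NN_mon _ _ _ _)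

/- ## abstract sum rearrangement -/

lemma sum_rearrange {M : Type*} [CommRing M] (m : ℕ) (F Hf T1 T2 : ℕ → M) (u v1 v2 : M)
    (h0 : F 0 = Hf 0)
    (h1 : ∀ i ∈ range (m+1), F (i+1) = u * T1 i + v2 * T2 i + Hf (i+1))
    (h2 : ∀ i ∈ range (m+1), Hf i = T1 i + v1 * T2 i)
    (h3 : Hf (m+1) = 0) :
    ∑ i ∈ range (m+1+1), F i =
      (1+u) * ∑ i ∈ range (m+1), T1 i + (v1+v2) * ∑ i ∈ range (m+1), T2 i := by
  rw [Finset.sum_range_succ' F (m+1), Finset.sum_congr rfl h1, h0]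
  have key : ∑ i ∈ range (m+1), Hf (i+1) + Hf 0 = ∑ i ∈ range (m+1), (T1 i + v1 * T2 i) := by
    rw [← Finset.sum_range_succ' Hf (m+1), Finset.sum_range_succ, h3, add_zero,
      Finset.sum_congr rfl h2]
  rw [Finset.sum_add_distrib, add_assoc, key, Finset.sum_add_distrib, Finset.sum_add_distrib,
    ← Finset.mul_sum, ← Finset.mul_sum, ← Finset.mul_sum]
  ring

/- ## The recursion for HPL -/

/-- The summand of `HPL`. -/
noncomputable def Tfun (o : ℤ) (m : ℕ) (i : ℕ) : LaurentRing :=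
  mon i (-(i : ℤ) + ((m : ℤ) + o) * i) (2 * (((m : ℤ) + o) * i)) (-(i : ℤ)) *
    qbinom (mon 0 1 2 0) m i *
    (∏ j ∈ Finset.range (m - i), (1 + mon 0 ((j : ℤ) + 1) (2 * j + 1) 0)) *
    (∏ j ∈ Finset.range i, (1 + mon 0 (j : ℤ) (2 * j + 1) 0))

/-- The auxiliary hybrid summand. -/
noncomputable def Hfun (o : ℤ) (m : ℕ) (i : ℕ) : LaurentRing :=
  mon i (-(i : ℤ) + (((m+1 : ℕ) : ℤ) + o) * i) (2 * ((((m+1 : ℕ) : ℤ) + o) * i)) (-(i : ℤ)) *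
    qbinom (mon 0 1 2 0) m i *
    (∏ j ∈ Finset.range (m + 1 - i), (1 + mon 0 ((j : ℤ) + 1) (2 * j + 1) 0)) *
    (∏ j ∈ Finset.range i, (1 + mon 0 (j : ℤ) (2 * j + 1) 0))

lemma HPL_sum (o : ℤ) (m : ℕ) : HPL o m = ∑ i ∈ Finset.range (m+1), Tfun o m i := rfl

lemma rec_H0 (o : ℤ) (m : ℕ) : Tfun o (m+1) 0 = Hfun o m 0 := by
  rw [Tfun, Hfun, qbinom_zero_right, qbinom_zero_right]

lemma rec_H3 (o : ℤ) (m : ℕ) : Hfun o m (m+1) = 0 := by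
  rw [Hfun, qbinom_eq_zero _ m (m+1) (by omega)]
  ring

lemma rec_H1 (o : ℤ) (m : ℕ) : ∀ i ∈ range (m+1),
    Tfun o (m+1) (i+1) =
      mon 1 (2*(m:ℤ)+o) (4*(m:ℤ)+2*o+3) (-1) * Tfun (o+1) m i
      + mon 1 (2*(m:ℤ)+o) (4*(m:ℤ)+2*o+2) (-1) * Tfun o m i
      + Hfun o m (i+1) := by
  intro i hmem
  have hi : i ≤ m := by simp only [Finset.mem_range] at hmem; omega
  have hmi : ((m - i : ℕ) : ℤ) = (m : ℤ) - i := by push_cast [Nat.cast_sub hi]; ring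
  rw [Tfun, Tfun, Tfun, Hfun]
  rw [show m + 1 - (i+1) = m - i by omega]
  rw [qbinom_pascal_symm _ m i hi, s_pow]
  rw [Finset.prod_range_succ (fun j => 1 + mon 0 (j : ℤ) (2 * (j:ℤ) + 1) 0) i]
  have Ea : mon ((i+1 : ℕ) : ℤ) (-((i+1 : ℕ) : ℤ) + (((m+1 : ℕ) : ℤ) + o) * ((i+1 : ℕ) : ℤ))
      (2 * ((((m+1 : ℕ) : ℤ) + o) * ((i+1 : ℕ) : ℤ))) (-((i+1 : ℕ) : ℤ)) *
      mon 0 ((m - i : ℕ) : ℤ) (2*((m - i : ℕ) : ℤ)) 0 * mon 0 (i:ℤ) (2*(i:ℤ)+1) 0 =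
      mon 1 (2*(m:ℤ)+o) (4*(m:ℤ)+2*o+3) (-1) *
      mon (i:ℤ) (-(i : ℤ) + ((m : ℤ) + (o+1)) * i) (2 * (((m : ℤ) + (o+1)) * i)) (-(i : ℤ)) := by
    rw [mon_mul, mon_mul, mon_mul]
    exact mon_congr (by push_cast; ring) (by rw [hmi]; push_cast; ring)
      (by rw [hmi]; push_cast; ring) (by push_cast; ring)
  have Eb : mon ((i+1 : ℕ) : ℤ) (-((i+1 : ℕ) : ℤ) + (((m+1 : ℕ) : ℤ) + o) * ((i+1 : ℕ) : ℤ))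
      (2 * ((((m+1 : ℕ) : ℤ) + o) * ((i+1 : ℕ) : ℤ))) (-((i+1 : ℕ) : ℤ)) *
      mon 0 ((m - i : ℕ) : ℤ) (2*((m - i : ℕ) : ℤ)) 0 =
      mon 1 (2*(m:ℤ)+o) (4*(m:ℤ)+2*o+2) (-1) *
      mon (i:ℤ) (-(i : ℤ) + ((m : ℤ) + o) * i) (2 * (((m : ℤ) + o) * i)) (-(i : ℤ)) := by
    rw [mon_mul, mon_mul]
    exact mon_congr (by push_cast; ring) (by rw [hmi]; push_cast; ring)
      (by rw [hmi]; push_cast; ring) (by push_cast; ring)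
  linear_combination
    (qbinom (mon 0 1 2 0) m i *
      (∏ j ∈ Finset.range (m - i), (1 + mon 0 ((j : ℤ) + 1) (2 * j + 1) 0)) *
      (∏ j ∈ Finset.range i, (1 + mon 0 (j : ℤ) (2 * j + 1) 0))) * Ea +
    (qbinom (mon 0 1 2 0) m i *
      (∏ j ∈ Finset.range (m - i), (1 + mon 0 ((j : ℤ) + 1) (2 * j + 1) 0)) *
      (∏ j ∈ Finset.range i, (1 + mon 0 (j : ℤ) (2 * j + 1) 0))) * Eb

lemma rec_H2 (o : ℤ) (m : ℕ) : ∀ i ∈ range (m+1),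
    Hfun o m i = Tfun (o+1) m i + mon 0 ((m:ℤ)+1) (2*(m:ℤ)+1) 0 * Tfun o m i := by
  intro i hmem
  have hi : i ≤ m := by simp only [Finset.mem_range] at hmem; omega
  have hmi : ((m - i : ℕ) : ℤ) = (m : ℤ) - i := by push_cast [Nat.cast_sub hi]; ring
  rw [Hfun, Tfun, Tfun]
  rw [show m + 1 - i = (m - i) + 1 by omega]
  rw [Finset.prod_range_succ (fun j => 1 + mon 0 ((j : ℤ) + 1) (2 * (j:ℤ) + 1) 0) (m-i)]
  have Ec : mon (i:ℤ) (-(i : ℤ) + (((m+1 : ℕ) : ℤ) + o) * i) (2 * ((((m+1 : ℕ) : ℤ) + o) * i)) (-(i : ℤ)) *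
      mon 0 (((m - i : ℕ) : ℤ) + 1) (2*((m - i : ℕ) : ℤ)+1) 0 =
      mon 0 ((m:ℤ)+1) (2*(m:ℤ)+1) 0 *
      mon (i:ℤ) (-(i : ℤ) + ((m : ℤ) + o) * i) (2 * (((m : ℤ) + o) * i)) (-(i : ℤ)) := by
    rw [mon_mul, mon_mul]
    exact mon_congr (by push_cast; ring) (by rw [hmi]; push_cast; ring)
      (by rw [hmi]; push_cast; ring) (by push_cast; ring)
  have Ed : mon (i:ℤ) (-(i : ℤ) + (((m+1 : ℕ) : ℤ) + o) * i) (2 * ((((m+1 : ℕ) : ℤ) + o) * i)) (-(i : ℤ)) =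
      mon (i:ℤ) (-(i : ℤ) + ((m : ℤ) + (o+1)) * i) (2 * (((m : ℤ) + (o+1)) * i)) (-(i : ℤ)) :=
    mon_congr (by push_cast; ring) (by push_cast; ring) (by push_cast; ring) (by push_cast; ring)
  linear_combination
    (qbinom (mon 0 1 2 0) m i *
      (∏ j ∈ Finset.range (m - i), (1 + mon 0 ((j : ℤ) + 1) (2 * j + 1) 0)) *
      (∏ j ∈ Finset.range i, (1 + mon 0 (j : ℤ) (2 * j + 1) 0))) * Ec +
    (qbinom (mon 0 1 2 0) m i *
      (∏ j ∈ Finset.range (m - i), (1 + mon 0 ((j : ℤ) + 1) (2 * j + 1) 0)) *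
      (∏ j ∈ Finset.range i, (1 + mon 0 (j : ℤ) (2 * j + 1) 0))) * Ed

lemma HPL_rec (o : ℤ) (m : ℕ) :
    HPL o (m+1) = (1 + mon 1 (2*(m:ℤ)+o) (4*(m:ℤ)+2*o+3) (-1)) * HPL (o+1) m
      + (mon 0 ((m:ℤ)+1) (2*(m:ℤ)+1) 0 + mon 1 (2*(m:ℤ)+o) (4*(m:ℤ)+2*o+2) (-1)) * HPL o m := by
  rw [HPL_sum o (m+1), HPL_sum (o+1) m, HPL_sum o m]
  exact sum_rearrange m (Tfun o (m+1)) (Hfun o m) (Tfun (o+1) m) (Tfun o m)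
    (mon 1 (2*(m:ℤ)+o) (4*(m:ℤ)+2*o+3) (-1))
    (mon 0 ((m:ℤ)+1) (2*(m:ℤ)+1) 0)
    (mon 1 (2*(m:ℤ)+o) (4*(m:ℤ)+2*o+2) (-1))
    (rec_H0 o m) (rec_H1 o m) (rec_H2 o m) (rec_H3 o m)


/-- `HP(q;o)_m ≡ Π_{ℓ=1}^m D_{2-ℓ-m-o} (mod D_{2-m-o})`, with quotient having
nonnegative integer coefficients. -/
theorem HP_mod_first_differential (o : ℤ) (m : ℕ) :
    ∃ Y : LaurentRing, (∀ v, 0 ≤ Y.coeff v) ∧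
      HPL o m - (∏ ℓ ∈ Finset.Icc 1 m, DD (2 - (ℓ : ℤ) - m - o)) =
        DD (2 - (m : ℤ) - o) * Y := by
  induction m generalizing o with
  | zero =>
    refine ⟨0, fun v => le_refl _, ?_⟩
    rw [show Finset.Icc 1 0 = (∅ : Finset ℕ) from rfl]
    rw [HPL_sum]
    simp only [Finset.prod_empty, Finset.sum_range_one, mul_zero]
    simp only [Tfun]
    norm_num [qbinom_zero_right, mon_zero]
  | succ m ih =>
    obtain ⟨Y, hY, hEq⟩ := ih (o+1)
    refine ⟨(1 + mon 1 (2*(m:ℤ)+o) (4*(m:ℤ)+2*o+3) (-1)) * Y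
      + mon 0 ((m:ℤ)+1) (2*(m:ℤ)+1) 0 * HPL o m, ?_, ?_⟩
    · exact NN_add (NN_mul (NN_add NN_one (NN_mon _ _ _ _)) hY)
        (NN_mul (NN_mon _ _ _ _) (NN_HPL o m))
    · rw [HPL_rec]
      rw [Finset.prod_Icc_succ_top (by omega : 1 ≤ m + 1)]
      -- identify the top factor with (1 + u)
      have htop : DD (2 - ((m+1 : ℕ) : ℤ) - (m+1 : ℕ) - o)
          = 1 + mon 1 (2*(m:ℤ)+o) (4*(m:ℤ)+2*o+3) (-1) := by
        rw [DD]
        congr 1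
        exact mon_congr rfl (by push_cast; ring) (by push_cast; ring) rfl
      -- identify the partial product with the (m, o+1) product
      have hprod : ∏ ℓ ∈ Finset.Icc 1 m, DD (2 - (ℓ : ℤ) - ((m+1 : ℕ) : ℤ) - o)
          = ∏ ℓ ∈ Finset.Icc 1 m, DD (2 - (ℓ : ℤ) - (m : ℤ) - (o+1)) :=
        Finset.prod_congr rfl fun ℓ _ => by
          congr 1
          push_cast
          ring
      -- identify the divisors
      have hdiv : DD (2 - ((m+1 : ℕ) : ℤ) - o) = DD (2 - (m : ℤ) - (o+1)) := by
        congr 1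
        push_cast
        ring
      -- factor v through the divisor
      have hv : mon 0 ((m:ℤ)+1) (2*(m:ℤ)+1) 0 + mon 1 (2*(m:ℤ)+o) (4*(m:ℤ)+2*o+2) (-1)
          = mon 0 ((m:ℤ)+1) (2*(m:ℤ)+1) 0 * DD (2 - (m : ℤ) - (o+1)) := by
        rw [DD, mul_add, mul_one, mon_mul]
        congr 1
        exact mon_congr (by ring) (by ring) (by ring) (by ring)
      rw [htop, hprod, hdiv, hv]
      linear_combination (1 + mon 1 (2*(m:ℤ)+o) (4*(m:ℤ)+2*o+3) (-1)) * hEq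
end
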